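/- For almost every x ∈ (0,1), liminf_{n→∞} θ_n(x) = 0; in particular, for every α ∈ (0,1] and almost every x, the set {n ≥ 1 : θ_n(x) < α} is infinite. -/

import Mathlib

open Real MeasureTheory Filter Set
open scoped Classical

noncomputable section

/-- The Gauss map `T x = 1/x - ⌊1/x⌋`. -/
def gaussMap (x : ℝ) : ℝ := 1/x - ⌊1/x⌋

/-- The natural extension `𝐓(x,y) = (1/x - ⌊1/x⌋, 1/y - ⌊1/x⌋)`. -/
def natExt (p : ℝ × ℝ) : ℝ × ℝ := (1/p.1 - ⌊1/p.1⌋, 1/p.2 - ⌊1/p.1⌋)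

/-- `(x₀, y₀) = 𝐓(x, ∞) = (1/x - ⌊1/x⌋, -⌊1/x⌋)`. -/
def initPt (x : ℝ) : ℝ × ℝ := (1/x - ⌊1/x⌋, -(⌊1/x⌋ : ℝ))

/-- Partial quotient `a_n = ⌊1 / T^{n-1} x⌋` (indexed from 1). -/
def cfA (x : ℝ) (n : ℕ) : ℤ := ⌊1 / (gaussMap^[n-1] x)⌋

/-- The pair `(p_n, q_n)` of numerator and denominator of the `n`-th convergent. -/
def pq (x : ℝ) : ℕ → ℤ × ℤ
  | 0 => (0, 1)
  | 1 => (1, ⌊1/x⌋)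
  | n+2 => (cfA x (n+2) * (pq x (n+1)).1 + (pq x n).1,
            cfA x (n+2) * (pq x (n+1)).2 + (pq x n).2)

def pconv (x : ℝ) (n : ℕ) : ℤ := (pq x n).1
def qconv (x : ℝ) (n : ℕ) : ℤ := (pq x n).2

/-- `θ_n(x) = q_n |q_n x - p_n|`. -/
def theta (x : ℝ) (n : ℕ) : ℝ := (qconv x n : ℝ) * |(qconv x n : ℝ) * x - (pconv x n : ℝ)|

/-- `Ω = (0,1) × (-∞,-1)`. -/
def Ωset : Set (ℝ × ℝ) := Set.Ioo (0:ℝ) 1 ×ˢ Set.Iio (-1 : ℝ)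

/-- `Ω_α = {(x,y) ∈ Ω : 1/(x-y) < α}`. -/
def Ωα (α : ℝ) : Set (ℝ × ℝ) := {p ∈ Ωset | 1 / (p.1 - p.2) < α}

/-- First return time to `Ω_α` (defined as `sInf`, so `0` when undefined). -/
def tauα (α : ℝ) (p : ℝ × ℝ) : ℕ := sInf {n : ℕ | 1 ≤ n ∧ natExt^[n] p ∈ Ωα α}

/-- First return map `𝐓_α`. -/
def retMap (α : ℝ) (p : ℝ × ℝ) : ℝ × ℝ := natExt^[tauα α p] p

/-- The invariant measure `μ` with density `(log 2)⁻¹ (x-y)⁻²` on `Ω`. -/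
def μnat : Measure (ℝ × ℝ) :=
  (volume.restrict Ωset).withDensity
    (fun p => ENNReal.ofReal ((Real.log 2)⁻¹ * ((p.1 - p.2)⁻¹)^2))

/-- `c_α = (log 2 · μ(Ω_α))⁻¹`, explicitly. -/
def cα (α : ℝ) : ℝ := if 1/2 < α then (1 - α + Real.log 2 + Real.log α)⁻¹ else α⁻¹

/-- The probability measure `μ_α` with density `c_α (x-y)⁻²` on `Ω_α`. -/
def μmeas (α : ℝ) : Measure (ℝ × ℝ) :=
  (volume.restrict (Ωα α)).withDensity
    (fun p => ENNReal.ofReal (cα α * ((p.1 - p.2)⁻¹)^2))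

/-- `Ω_α⁻ = {(x,y) ∈ Ω : α < x, y < αx/(α-x)}`. -/
def Ωminus (α : ℝ) : Set (ℝ × ℝ) := {p ∈ Ωset | α < p.1 ∧ p.2 < α * p.1 / (α - p.1)}

/-!
Write `xₙ = Tⁿ x` for the orbit of `x` under the Gauss map `T`. The recursions for `pₙ, qₙ`
give `qₙ x - pₙ = (-1)ⁿ x₀ x₁ ⋯ xₙ` and `qₙ₊₁ x₀ ⋯ xₙ + qₙ x₀ ⋯ xₙ₊₁ = 1`,
whence `θₙ(x) ≤ xₙ`. So it suffices that almost every orbit comes arbitrarily close to `0`.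

For the Gauss density `1 / (1 + x)`, the inverse branches `y ↦ 1 / (y + k)` of `T` with
`k ≤ N`, which cover `[1/N, 1)`, carry at most the fraction `N / (N + 1)` of the measure of any
set: their weights `1 / (y + k) - 1 / (y + k + 1)` telescope. Hence the points whose first `n`
iterates stay in `[1/N, 1)` have measure at most `(N / (N + 1))ⁿ`. The orbits that eventually stay
there lie in preimages of this null set under iterates of `T`, and these are null because the
inverse branches of `T` are smooth.
-/

lemma gaussMap_eq_fract (x : ℝ) : gaussMap x = Int.fract (1 / x) := rfl

lemma measurable_gaussMap : Measurable gaussMap :=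
  (measurable_const.div measurable_id).fract

lemma gaussMap_mem_Ico (x : ℝ) : gaussMap x ∈ Ico 0 1 :=
  ⟨Int.fract_nonneg _, Int.fract_lt_one _⟩

lemma irrational_gaussMap {x : ℝ} (hx : Irrational x) : Irrational (gaussMap x) := by
  rw [gaussMap_eq_fract, one_div]
  exact hx.inv.sub_intCast _

lemma gaussMap_pos_of_irrational {x : ℝ} (hx : Irrational x) : 0 < gaussMap x :=
  (gaussMap_mem_Ico x).1.lt_of_ne fun h => irrational_gaussMap hx ⟨0, by simp [h]⟩

lemma irrational_gaussMap_iterate {x : ℝ} (hx : Irrational x) (n : ℕ) :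
    Irrational (gaussMap^[n] x) := by
  induction n with
  | zero => exact hx
  | succ n ih => rw [Function.iterate_succ_apply']; exact irrational_gaussMap ih

lemma gaussMap_iterate_pos {x : ℝ} (hx : 0 < x) (hirr : Irrational x) (n : ℕ) :
    0 < gaussMap^[n] x := by
  cases n with
  | zero => exact hx
  | succ n =>
    rw [Function.iterate_succ_apply']
    exact gaussMap_pos_of_irrational (irrational_gaussMap_iterate hirr n)

lemma gaussMap_iterate_mem_Ico {x : ℝ} (hx : x ∈ Ico 0 1) (n : ℕ) :
    gaussMap^[n] x ∈ Ico 0 1 := by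
  cases n with
  | zero => exact hx
  | succ n => rw [Function.iterate_succ_apply']; exact gaussMap_mem_Ico _

lemma floor_add_gaussMap (y : ℝ) : (⌊1 / y⌋ : ℝ) + gaussMap y = 1 / y :=
  add_sub_cancel _ _

lemma cfA_add_gaussMap_iterate_mul (x : ℝ) (n : ℕ) (h : gaussMap^[n] x ≠ 0) :
    (cfA x (n + 1) + gaussMap^[n + 1] x) * gaussMap^[n] x = 1 := by
  rw [Function.iterate_succ_apply', cfA, Nat.add_sub_cancel, floor_add_gaussMap,
    one_div_mul_cancel h]

def orbitProd (x : ℝ) (n : ℕ) : ℝ := ∏ k ∈ Finset.range (n + 1), gaussMap^[k] x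

lemma orbitProd_zero (x : ℝ) : orbitProd x 0 = x := by simp [orbitProd]

lemma orbitProd_succ (x : ℝ) (n : ℕ) :
    orbitProd x (n + 1) = orbitProd x n * gaussMap^[n + 1] x :=
  Finset.prod_range_succ _ _

lemma qconv_zero (x : ℝ) : qconv x 0 = 1 := rfl
lemma qconv_one (x : ℝ) : qconv x 1 = cfA x 1 := rfl
lemma qconv_add_two (x : ℝ) (n : ℕ) :
    qconv x (n + 2) = cfA x (n + 2) * qconv x (n + 1) + qconv x n := rfl
lemma pconv_zero (x : ℝ) : pconv x 0 = 0 := rfl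
lemma pconv_one (x : ℝ) : pconv x 1 = 1 := rfl
lemma pconv_add_two (x : ℝ) (n : ℕ) :
    pconv x (n + 2) = cfA x (n + 2) * pconv x (n + 1) + pconv x n := rfl

section Convergents

variable {x : ℝ} (hx : 0 < x) (hirr : Irrational x)
include hx hirr

lemma orbitProd_pos (n : ℕ) : 0 < orbitProd x n :=
  Finset.prod_pos fun k _ => gaussMap_iterate_pos hx hirr k

lemma cfA_succ_nonneg (n : ℕ) : 0 ≤ cfA x (n + 1) :=
  Int.floor_nonneg.2 (one_div_nonneg.2 (gaussMap_iterate_pos hx hirr n).le)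

lemma qconv_nonneg (n : ℕ) : 0 ≤ qconv x n := by
  induction n using Nat.twoStepInduction with
  | zero => simp [qconv_zero]
  | one => exact cfA_succ_nonneg hx hirr 0
  | more n ih₀ ih₁ =>
    rw [qconv_add_two]
    have := cfA_succ_nonneg hx hirr (n + 1)
    positivity

lemma qconv_mul_sub_pconv (n : ℕ) :
    (qconv x n : ℝ) * x - pconv x n = (-1) ^ n * orbitProd x n := by
  induction n using Nat.twoStepInduction with
  | zero => simp [qconv_zero, pconv_zero, orbitProd_zero]
  | one =>
    have h := cfA_add_gaussMap_iterate_mul x 0 hx.ne'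
    simp only [Function.iterate_zero_apply, zero_add] at h
    rw [qconv_one, pconv_one, orbitProd_succ, orbitProd_zero]
    linear_combination h
  | more n ih₀ ih₁ =>
    have h := cfA_add_gaussMap_iterate_mul x (n + 1) (gaussMap_iterate_pos hx hirr _).ne'
    rw [orbitProd_succ] at ih₁
    rw [qconv_add_two, pconv_add_two, orbitProd_succ, orbitProd_succ]
    push_cast
    linear_combination -(-1) ^ n * orbitProd x n * h + (cfA x (n + 2) : ℝ) * ih₁ + ih₀

lemma qconv_succ_mul_orbitProd_add (n : ℕ) :
    (qconv x (n + 1) : ℝ) * orbitProd x n + qconv x n * orbitProd x (n + 1) = 1 := by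
  induction n with
  | zero =>
    have h := cfA_add_gaussMap_iterate_mul x 0 hx.ne'
    simp only [Function.iterate_zero_apply, zero_add] at h
    rw [qconv_one, qconv_zero, orbitProd_succ, orbitProd_zero]
    linear_combination h
  | succ n ih =>
    have h := cfA_add_gaussMap_iterate_mul x (n + 1) (gaussMap_iterate_pos hx hirr _).ne'
    rw [qconv_add_two, orbitProd_succ x (n + 1), orbitProd_succ x n]
    rw [orbitProd_succ] at ih
    push_cast
    linear_combination qconv x (n + 1) * orbitProd x n * h + ih

lemma theta_eq (n : ℕ) : theta x n = qconv x n * orbitProd x n := by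
  rw [theta, qconv_mul_sub_pconv hx hirr, abs_mul, abs_pow, abs_neg, abs_one, one_pow, one_mul,
    abs_of_pos (orbitProd_pos hx hirr n)]

lemma theta_le_gaussMap_iterate (n : ℕ) : theta x n ≤ gaussMap^[n] x := by
  cases n with
  | zero => simp [theta_eq hx hirr, qconv_zero, orbitProd_zero]
  | succ n =>
    have hkey := qconv_succ_mul_orbitProd_add hx hirr n
    have hrest : 0 ≤ (qconv x n : ℝ) * orbitProd x (n + 1) :=
      mul_nonneg (by exact_mod_cast qconv_nonneg hx hirr n) (orbitProd_pos hx hirr _).le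
    rw [theta_eq hx hirr, orbitProd_succ, ← mul_assoc]
    exact mul_le_of_le_one_left (gaussMap_iterate_pos hx hirr _).le (by linarith)

lemma theta_nonneg (n : ℕ) : 0 ≤ theta x n :=
  mul_nonneg (by exact_mod_cast qconv_nonneg hx hirr n) (abs_nonneg _)

end Convergents

/-- The inverse branch of `gaussMap` with values in `(1/(k+2), 1/(k+1)]`. -/
def gaussBranch (k : ℕ) (y : ℝ) : ℝ := (y + (k + 1))⁻¹

lemma one_le_floor_one_div {x : ℝ} (hx0 : 0 < x) (hx1 : x ≤ 1) : 1 ≤ ⌊1 / x⌋₊ :=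
  Nat.le_floor (by simpa using one_le_one_div hx0 hx1)

lemma gaussBranch_gaussMap {x : ℝ} (hx0 : 0 < x) (hx1 : x ≤ 1) :
    gaussBranch (⌊1 / x⌋₊ - 1) (gaussMap x) = x := by
  rw [gaussBranch, Nat.cast_sub (one_le_floor_one_div hx0 hx1), Nat.cast_one, sub_add_cancel,
    natCast_floor_eq_intCast_floor (by positivity), add_comm, floor_add_gaussMap, one_div, inv_inv]

lemma hasDerivAt_gaussBranch (k : ℕ) {y : ℝ} (hy : 0 ≤ y) :
    HasDerivAt (gaussBranch k) (-1 / (y + (k + 1)) ^ 2) y :=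
  ((hasDerivAt_id y).add_const _).inv (by positivity)

lemma gaussBranch_injective (k : ℕ) : Function.Injective (gaussBranch k) :=
  fun _ _ h => add_right_cancel (inv_injective h)

/-- The Gauss measure, without its normalising factor `1 / log 2`. -/
def gaussMeasure : Measure ℝ :=
  (volume.restrict (Ico 0 1)).withDensity fun x => ENNReal.ofReal (1 + x)⁻¹

lemma gaussMeasure_apply {S : Set ℝ} (hS : MeasurableSet S) :
    gaussMeasure S = ∫⁻ x in S ∩ Ico 0 1, ENNReal.ofReal (1 + x)⁻¹ := by
  rw [gaussMeasure, withDensity_apply _ hS, Measure.restrict_restrict hS]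

lemma gaussMeasure_le_lintegral (S : Set ℝ) :
    gaussMeasure S ≤ ∫⁻ x in S, ENNReal.ofReal (1 + x)⁻¹ := by
  rw [gaussMeasure, withDensity_apply']
  exact lintegral_mono' (Measure.restrict_mono subset_rfl Measure.restrict_le_self) le_rfl

lemma gaussMeasure_univ_le_one : gaussMeasure univ ≤ 1 := by
  rw [gaussMeasure_apply MeasurableSet.univ, univ_inter]
  calc ∫⁻ x in Ico 0 1, ENNReal.ofReal (1 + x)⁻¹
      ≤ ∫⁻ _ in Ico (0 : ℝ) 1, 1 := setLIntegral_mono measurable_const fun x hx =>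
        ENNReal.ofReal_le_one.2 (inv_le_one_of_one_le₀ (by linarith [hx.1]))
    _ = 1 := by simp

lemma absolutelyContinuous_gaussMeasure : volume.restrict (Ico 0 1) ≪ gaussMeasure :=
  withDensity_absolutelyContinuous' (by fun_prop) <| (ae_restrict_iff' measurableSet_Ico).2 <|
    ae_of_all _ fun x hx => (ENNReal.ofReal_pos.2 (by have := hx.1; positivity)).ne'

lemma gaussMeasure_image_gaussBranch_le (k : ℕ) {S : Set ℝ} (hS : MeasurableSet S)
    (hS0 : S ⊆ Ici 0) :
    gaussMeasure (gaussBranch k '' S) ≤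
      ∫⁻ y in S, ENNReal.ofReal ((y + (k + 1))⁻¹ - (y + (k + 2))⁻¹) := by
  calc gaussMeasure (gaussBranch k '' S)
      ≤ ∫⁻ x in gaussBranch k '' S, ENNReal.ofReal (1 + x)⁻¹ := gaussMeasure_le_lintegral _
    _ = ∫⁻ y in S, ENNReal.ofReal |-1 / (y + (k + 1)) ^ 2| *
          ENNReal.ofReal (1 + gaussBranch k y)⁻¹ :=
        lintegral_image_eq_lintegral_abs_deriv_mul hS
          (fun y hy => (hasDerivAt_gaussBranch k (hS0 hy)).hasDerivWithinAt)
          (gaussBranch_injective k).injOn _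
    _ = _ := by
        refine setLIntegral_congr_fun hS fun y hy => ?_
        have h1 : 0 < y + (k + 1) := by have : 0 ≤ y := hS0 hy; positivity
        have h3 : 0 < y + (k + 2) := by linarith
        have h2 : (1 + (y + (k + 1))⁻¹)⁻¹ = (y + (k + 1)) / (y + (k + 2)) := by
          field_simp
          ring
        rw [← ENNReal.ofReal_mul (abs_nonneg _), gaussBranch, h2, abs_div, abs_neg, abs_one,
          abs_of_pos (pow_pos h1 2)]
        congr 1
        field_simp
        ring

lemma sum_range_inv_sub_inv (y : ℝ) (N : ℕ) :
    ∑ k ∈ Finset.range N, ((y + (k + 1))⁻¹ - (y + (k + 2))⁻¹) =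
      (y + 1)⁻¹ - (y + (N + 1))⁻¹ := by
  have := Finset.sum_range_sub' (fun k : ℕ => (y + (k + 1 : ℝ))⁻¹) N
  push_cast at this
  simpa [add_assoc, one_add_one_eq_two] using this

lemma inv_sub_inv_le_mul_inv {y : ℝ} (hy : 0 ≤ y) (N : ℕ) :
    (y + 1)⁻¹ - (y + (N + 1))⁻¹ ≤ N / (N + 1) * (1 + y)⁻¹ := by
  have hN : (0 : ℝ) ≤ N := N.cast_nonneg
  rw [inv_sub_inv (by positivity) (by positivity), show y + (N + 1) - (y + 1) = N by ring,
    div_mul_eq_mul_div, ← div_eq_mul_inv, div_div, mul_comm (y + 1)]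
  exact div_le_div_of_nonneg_left hN (by positivity) (by nlinarith)

lemma gaussMeasure_preimage_le {N : ℕ} (hN : 0 < N) {S : Set ℝ} (hS : MeasurableSet S) :
    gaussMeasure {x | x ∈ Ico (N : ℝ)⁻¹ 1 ∧ gaussMap x ∈ S} ≤
      ENNReal.ofReal (N / (N + 1)) * gaussMeasure S := by
  have hcover : {x | x ∈ Ico (N : ℝ)⁻¹ 1 ∧ gaussMap x ∈ S} ⊆
      ⋃ k ∈ Finset.range N, gaussBranch k '' (S ∩ Ico 0 1) := by
    rintro x ⟨⟨hNx, hx1⟩, hTx⟩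
    have hx0 : 0 < x := lt_of_lt_of_le (by positivity) hNx
    have hfloor : ⌊1 / x⌋₊ ≤ N :=
      Nat.floor_le_of_le (by rw [one_div]; exact (inv_le_comm₀ (by positivity) hx0).1 hNx)
    have := one_le_floor_one_div hx0 hx1.le
    exact mem_biUnion (Finset.mem_range.2 (by omega))
      ⟨gaussMap x, ⟨hTx, gaussMap_mem_Ico x⟩, gaussBranch_gaussMap hx0 hx1.le⟩
  calc gaussMeasure {x | x ∈ Ico (N : ℝ)⁻¹ 1 ∧ gaussMap x ∈ S}
      ≤ ∑ k ∈ Finset.range N, gaussMeasure (gaussBranch k '' (S ∩ Ico 0 1)) :=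
        (measure_mono hcover).trans (measure_biUnion_finset_le _ _)
    _ ≤ ∑ k ∈ Finset.range N, ∫⁻ y in S ∩ Ico 0 1,
          ENNReal.ofReal ((y + (k + 1))⁻¹ - (y + (k + 2))⁻¹) :=
        Finset.sum_le_sum fun k _ => gaussMeasure_image_gaussBranch_le k
          (hS.inter measurableSet_Ico) fun y hy => hy.2.1
    _ = ∫⁻ y in S ∩ Ico 0 1, ∑ k ∈ Finset.range N,
          ENNReal.ofReal ((y + (k + 1))⁻¹ - (y + (k + 2))⁻¹) :=
        (lintegral_finsetSum _ fun k _ => by fun_prop).symm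
    _ ≤ ∫⁻ y in S ∩ Ico 0 1,
          ENNReal.ofReal (N / (N + 1)) * ENNReal.ofReal (1 + y)⁻¹ := by
        refine setLIntegral_mono (by fun_prop) fun y hy => ?_
        have hy0 : 0 ≤ y := hy.2.1
        rw [← ENNReal.ofReal_sum_of_nonneg fun k _ =>
            sub_nonneg.2 (inv_anti₀ (by positivity) (by linarith)),
          sum_range_inv_sub_inv, ← ENNReal.ofReal_mul (by positivity)]
        exact ENNReal.ofReal_le_ofReal (inv_sub_inv_le_mul_inv hy0 N)
    _ = ENNReal.ofReal (N / (N + 1)) * gaussMeasure S := by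
        rw [lintegral_const_mul _ (by fun_prop), gaussMeasure_apply hS]

lemma measurableSet_setOf_forall_gaussMap_iterate_mem {I : Set ℝ} (hI : MeasurableSet I)
    (n : ℕ) : MeasurableSet {x | ∀ k < n, gaussMap^[k] x ∈ I} := by
  simp only [ofPred_forall]
  exact .iInter fun k => .iInter fun _ => measurable_gaussMap.iterate k hI

lemma gaussMeasure_setOf_forall_lt_le {N : ℕ} (hN : 0 < N) (n : ℕ) :
    gaussMeasure {x | ∀ k < n, gaussMap^[k] x ∈ Ico (N : ℝ)⁻¹ 1} ≤
      ENNReal.ofReal (N / (N + 1)) ^ n := by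
  induction n with
  | zero => simpa using gaussMeasure_univ_le_one
  | succ n ih =>
    calc gaussMeasure {x | ∀ k < n + 1, gaussMap^[k] x ∈ Ico (N : ℝ)⁻¹ 1}
        ≤ gaussMeasure {x | x ∈ Ico (N : ℝ)⁻¹ 1 ∧
            gaussMap x ∈ {y | ∀ k < n, gaussMap^[k] y ∈ Ico (N : ℝ)⁻¹ 1}} :=
          measure_mono fun x hx => ⟨hx 0 n.succ_pos, fun k hk => by
            simpa only [← Function.iterate_succ_apply] using hx (k + 1) (by omega)⟩
      _ ≤ ENNReal.ofReal (N / (N + 1)) *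
            gaussMeasure {y | ∀ k < n, gaussMap^[k] y ∈ Ico (N : ℝ)⁻¹ 1} :=
          gaussMeasure_preimage_le hN
            (measurableSet_setOf_forall_gaussMap_iterate_mem measurableSet_Ico n)
      _ ≤ ENNReal.ofReal (N / (N + 1)) ^ (n + 1) := by
          rw [pow_succ']
          gcongr

lemma volume_setOf_forall_gaussMap_iterate_mem_eq_zero {N : ℕ} (hN : 0 < N) :
    volume {x | ∀ k, gaussMap^[k] x ∈ Ico (N : ℝ)⁻¹ 1} = 0 := by
  have hc : ENNReal.ofReal (N / (N + 1)) < 1 := by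
    rw [ENNReal.ofReal_lt_one, div_lt_one (by positivity)]
    linarith
  have hB : gaussMeasure {x | ∀ k, gaussMap^[k] x ∈ Ico (N : ℝ)⁻¹ 1} = 0 :=
    le_antisymm (ge_of_tendsto' (ENNReal.tendsto_pow_atTop_nhds_zero_of_lt_one hc) fun n =>
      (gaussMeasure_setOf_forall_lt_le hN n).trans' (measure_mono fun x hx k _ => hx k)) bot_le
  have hBI : {x | ∀ k, gaussMap^[k] x ∈ Ico (N : ℝ)⁻¹ 1} ⊆ Ico 0 1 := fun x hx =>
    ⟨(inv_nonneg.2 N.cast_nonneg).trans (hx 0).1, (hx 0).2⟩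
  rw [← Measure.restrict_eq_self volume hBI]
  exact absolutelyContinuous_gaussMeasure hB

lemma volume_Ico_inter_preimage_gaussMap_eq_zero {Z : Set ℝ} (hZ : volume Z = 0) :
    volume (Ico 0 1 ∩ gaussMap ⁻¹' Z) = 0 := by
  have hsub :
      Ico 0 1 ∩ gaussMap ⁻¹' Z ⊆ {0} ∪ ⋃ k : ℕ, gaussBranch k '' (Z ∩ Ici 0) := by
    rintro x ⟨hx, hTx⟩
    rcases hx.1.eq_or_lt with rfl | hx0
    · exact Or.inl rfl
    · exact Or.inr (mem_iUnion.2 ⟨_, gaussMap x, ⟨hTx, (gaussMap_mem_Ico x).1⟩,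
        gaussBranch_gaussMap hx0 hx.2.le⟩)
  refine measure_mono_null hsub (measure_union_null (measure_singleton 0)
    (measure_iUnion_null fun k => ?_))
  exact addHaar_image_eq_zero_of_differentiableOn_of_addHaar_eq_zero volume
    (fun y hy => (hasDerivAt_gaussBranch k hy.2).differentiableAt.differentiableWithinAt)
    (measure_mono_null inter_subset_left hZ)

lemma volume_Ico_inter_preimage_gaussMap_iterate_eq_zero {Z : Set ℝ} (hZ : volume Z = 0)
    (m : ℕ) : volume (Ico 0 1 ∩ (gaussMap^[m]) ⁻¹' Z) = 0 := by
  induction m with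
  | zero => exact measure_mono_null inter_subset_right hZ
  | succ m ih =>
    refine measure_mono_null ?_ (volume_Ico_inter_preimage_gaussMap_eq_zero ih)
    rintro x ⟨hx, hTx⟩
    refine ⟨hx, gaussMap_mem_Ico x, ?_⟩
    rwa [mem_preimage, Function.iterate_succ_apply] at hTx

theorem ae_frequently_gaussMap_iterate_lt :
    ∀ᵐ x : ℝ, x ∈ Ico 0 1 → ∀ ε > 0, ∃ᶠ n in atTop, gaussMap^[n] x < ε := by
  have hfreq : ∀ N : ℕ, ∀ᵐ x : ℝ, x ∈ Ico 0 1 →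
      ∃ᶠ n in atTop, gaussMap^[n] x < ((N + 1 : ℕ) : ℝ)⁻¹ := by
    intro N
    rw [ae_iff]
    refine measure_mono_null ?_ (measure_iUnion_null fun m =>
      volume_Ico_inter_preimage_gaussMap_iterate_eq_zero
        (volume_setOf_forall_gaussMap_iterate_mem_eq_zero N.succ_pos) m)
    intro x hx
    simp only [mem_ofPred_eq, Classical.not_imp, not_frequently, not_lt, eventually_atTop] at hx
    obtain ⟨hx, m, hm⟩ := hx
    refine mem_iUnion.2 ⟨m, hx, fun k => ?_⟩
    rw [← Function.iterate_add_apply]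
    exact ⟨hm _ (Nat.le_add_left m k), (gaussMap_iterate_mem_Ico hx _).2⟩
  filter_upwards [ae_all_iff.2 hfreq] with x hx hxI ε hε
  obtain ⟨N, hN⟩ := exists_nat_one_div_lt hε
  refine (hx N hxI).mono fun n hn => hn.trans ?_
  simpa using hN

lemma Filter.liminf_eq_zero_of_frequently_lt {ι : Type*} {l : Filter ι} {u : ι → ℝ}
    (h0 : ∀ i, 0 ≤ u i) (h : ∀ ε > 0, ∃ᶠ i in l, u i < ε) : liminf u l = 0 := by
  refine le_antisymm (le_of_forall_gt_imp_ge_of_dense fun ε hε => ?_) ?_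
  · exact liminf_le_of_frequently_le ((h ε hε).mono fun _ => le_of_lt)
      (isBoundedUnder_of ⟨0, h0⟩)
  · refine le_liminf_of_le ⟨1, fun a ha => ?_⟩ (Eventually.of_forall h0)
    obtain ⟨i, hi, hai⟩ := ((h 1 one_pos).and_eventually ha).exists
    exact hai.trans hi.le

/-- for a.e. `x ∈ (0,1)`, `liminf θ_n(x) = 0`; in particular for every
`α ∈ (0,1]` the set `{n ≥ 1 : θ_n(x) < α}` is infinite. -/
theorem stmt_6 :
    ∀ᵐ x : ℝ, x ∈ Set.Ioo (0:ℝ) 1 →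
      Filter.liminf (fun n : ℕ => theta x n) Filter.atTop = 0 ∧
      ∀ α ∈ Set.Ioc (0:ℝ) 1, {n : ℕ | 1 ≤ n ∧ theta x n < α}.Infinite := by
  filter_upwards [(countable_range ((↑) : ℚ → ℝ)).ae_notMem volume,
    ae_frequently_gaussMap_iterate_lt] with x hirr hfreq hx
  have hθ : ∀ ε > 0, ∃ᶠ n in atTop, theta x n < ε := fun ε hε =>
    (hfreq (Ioo_subset_Ico_self hx) ε hε).mono fun n hn =>
      (theta_le_gaussMap_iterate hx.1 hirr n).trans_lt hn
  refine ⟨liminf_eq_zero_of_frequently_lt (theta_nonneg hx.1 hirr) hθ, fun α hα => ?_⟩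
  rw [← Nat.frequently_atTop_iff_infinite]
  exact ((hθ α hα.1).and_eventually (eventually_ge_atTop 1)).mono fun n hn => ⟨hn.2, hn.1⟩
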